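/- Let G be a finite group, K a Carter subgroup of G, and z a nontrivial element of the center of K. Suppose that any two Carter subgroups of C_G(z) are conjugate in C_G(z). If x ∈ G and z^(x⁻¹) ∈ Z(K), then z^x = z. -/

import Mathlib

open Pointwise

/-- A Carter subgroup: a nilpotent self-normalizing subgroup. -/
def IsCarter {G : Type*} [Group G] (H : Subgroup G) : Prop :=
  Group.IsNilpotent H ∧ Subgroup.normalizer (H : Set G) = H

namespace IsCarter

variable {G : Type*} [Group G] {K : Subgroup G}

theorem map_equiv {N : Type*} [Group N] (hK : IsCarter K) (f : G ≃* N) :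
    IsCarter (K.map f.toMonoidHom) := by
  have := hK.1
  refine ⟨Group.nilpotent_of_mulEquiv (f.subgroupMap K), ?_⟩
  rw [← Subgroup.map_equiv_normalizer_eq, hK.2]

theorem smul {α : Type*} [Group α] [MulDistribMulAction α G] (hK : IsCarter K) (a : α) :
    IsCarter (a • K) :=
  hK.map_equiv (MulDistribMulAction.toMulEquiv G a)

theorem subgroupOf (hK : IsCarter K) {C : Subgroup G} (hKC : K ≤ C) :
    IsCarter (K.subgroupOf C) := by
  have := hK.1
  refine ⟨Group.nilpotent_of_mulEquiv (Subgroup.subgroupOfEquivOfLe hKC).symm, ?_⟩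
  rw [← Subgroup.subgroupOf_normalizer_eq hKC, hK.2]

theorem mem_of_conj_smul_le (hK : IsCarter K) {C : Subgroup G} (hKC : K ≤ C)
    (hconj : ∀ K₁ K₂ : Subgroup C, IsCarter K₁ → IsCarter K₂ →
      ∃ c : C, MulAut.conj c • K₁ = K₂)
    {g : G} (hg : MulAut.conj g • K ≤ C) : g ∈ C := by
  -- Conjugacy in `C` gives `c ∈ C` with `Kᶜ = Kᵍ`, so `g⁻¹ c ∈ N_G(K) = K ≤ C`.
  obtain ⟨c, hc⟩ := hconj _ _ (hK.subgroupOf hKC) ((hK.smul (MulAut.conj g)).subgroupOf hg)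
  rw [Subgroup.conj_smul_subgroupOf hKC, Subgroup.subgroupOf_inj,
    inf_of_le_left (Subgroup.conj_smul_le_of_le hKC c), inf_of_le_left hg] at hc
  have hnorm : g⁻¹ * c ∈ Subgroup.normalizer (K : Set G) := by
    rw [Subgroup.mem_normalizer_iff_map_conj_eq]
    change MulAut.conj (g⁻¹ * c) • K = K
    rw [map_mul, mul_smul, hc, ← mul_smul, ← map_mul, inv_mul_cancel, map_one, one_smul]
  rw [hK.2] at hnorm
  simpa using C.mul_mem c.2 (C.inv_mem (hKC hnorm))

end IsCarter

theorem conj_central_elt_eq_general {G : Type*} [Group G]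
    (K : Subgroup G) (hK : IsCarter K) (z : G)
    (hzc : ∀ k ∈ K, k * z = z * k)
    (hconj : ∀ K₁ K₂ : Subgroup (Subgroup.centralizer {z} : Subgroup G),
      IsCarter K₁ → IsCarter K₂ →
        ∃ c : (Subgroup.centralizer {z} : Subgroup G), MulAut.conj c • K₁ = K₂)
    (x : G) (hx : x * z * x⁻¹ ∈ K ∧ ∀ k ∈ K, k * (x * z * x⁻¹) = (x * z * x⁻¹) * k) :
    x⁻¹ * z * x = z := by
  have hKC : K ≤ Subgroup.centralizer {z} := fun k hk =>
    Subgroup.mem_centralizer_singleton_iff.mpr (hzc k hk)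
  have hK'C : MulAut.conj x⁻¹ • K ≤ Subgroup.centralizer {z} := by
    intro g hg
    rw [Subgroup.mem_pointwise_smul_iff_inv_smul_mem, ← map_inv, inv_inv, MulAut.smul_def] at hg
    rw [Subgroup.mem_centralizer_singleton_iff]
    exact (MulAut.conj x).injective (by simpa only [map_mul, MulAut.conj_apply] using hx.2 _ hg)
  have hxz := Subgroup.mem_centralizer_singleton_iff.mp (hK.mem_of_conj_smul_le hKC hconj hK'C)
  rw [hxz, mul_assoc, inv_mul_cancel, mul_one]

theorem conj_central_elt_eq {G : Type*} [Group G] [Finite G]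
    (K : Subgroup G) (hK : IsCarter K) (z : G) (hz : z ≠ 1)
    (hzK : z ∈ K) (hzc : ∀ k ∈ K, k * z = z * k)
    (hconj : ∀ K₁ K₂ : Subgroup (Subgroup.centralizer {z} : Subgroup G),
      IsCarter K₁ → IsCarter K₂ →
        ∃ c : (Subgroup.centralizer {z} : Subgroup G), MulAut.conj c • K₁ = K₂)
    (x : G) (hx : x * z * x⁻¹ ∈ K ∧ ∀ k ∈ K, k * (x * z * x⁻¹) = (x * z * x⁻¹) * k) :
    x⁻¹ * z * x = z :=
  conj_central_elt_eq_general K hK z hzc hconj x hx
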